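/- Let k be a field of characteristic different from 2, R = k[X]/(X²), ε the image of X, and let ρ : SL₂(R) → SL₂(k) be the homomorphism induced by ε ↦ 0. Let S = {g ∈ SL₂(R) : ρ(g) = (δ, y; 0, δ) for some δ ∈ {1, −1} and y ∈ k}. Then the commutator subgroup of S equals {(1+xε, yε; 0, 1−xε) : x, y ∈ k}. -/

import Mathlib

/-!
The image of `S` under `ρ` consists of the matrices `±(1, y; 0, 1)`, which commute, so every
commutator of `S` lies in `ker ρ`. The lower-left entries and the differences of diagonal entries
of elements of `S` lie in `εk`, an ideal of square zero, and this kills the lower-left entry of a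
commutator. Hence the commutator subgroup lies in `ker ρ ∩ {g | g₁₀ = 0}`, which is exactly the
set of matrices `(1 + xε, yε; 0, 1 - xε)`: the determinant forces the `ε`-parts of the diagonal to
be opposite. Conversely `[(1, 1; 0, 1), (1 + aε, 0; xε, 1 - aε)] = (1 + xε, -(2a + x)ε; 0, 1 - xε)`,
and `a = -(x + y)/2` (here `char k ≠ 2` is needed) gives every such matrix as a single commutator.
-/

open Matrix TrivSqZeroExt

/-- The reduction homomorphism `SL₂(k[X]/(X²)) → SL₂(k)` induced by `ε ↦ 0`. -/
noncomputable def rho (k : Type) [Field k] :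
    Matrix.SpecialLinearGroup (Fin 2) (DualNumber k) →* Matrix.SpecialLinearGroup (Fin 2) k :=
  Matrix.SpecialLinearGroup.map (TrivSqZeroExt.fstHom k k k).toRingHom

open scoped MatrixGroups DualNumber

namespace Matrix.SpecialLinearGroup

variable {R : Type*} [CommRing R]

def upperTriangular : Subgroup SL(2, R) where
  carrier := {g | g 1 0 = 0}
  one_mem' := by simp
  mul_mem' {a b} (ha : a 1 0 = 0) (hb : b 1 0 = 0) := by
    simp [coe_mul, mul_apply, Fin.sum_univ_two, ha, hb]
  inv_mem' {a} (ha : a 1 0 = 0) := by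
    simp [coe_inv, adjugate_fin_two, ha]

theorem commutator_apply_one_zero {I : Ideal R} (hI : I * I = ⊥) {s t : SL(2, R)}
    (hs : s 1 0 ∈ I) (hs' : s 0 0 - s 1 1 ∈ I) (ht : t 1 0 ∈ I) (ht' : t 0 0 - t 1 1 ∈ I) :
    (s * t * s⁻¹ * t⁻¹) 1 0 = 0 := by
  have h {x y : R} (hx : x ∈ I) (hy : y ∈ I) : x * y = 0 := by
    simpa [hI] using Ideal.mul_mem_mul hx hy
  simp only [coe_mul, coe_inv, adjugate_fin_two, mul_apply, Fin.sum_univ_two, of_apply,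
    cons_val', cons_val_zero, cons_val_fin_one, cons_val_one, mul_neg]
  linear_combination (t 0 0 * s 0 1 - s 0 0 * t 0 1) * h hs ht + s 1 1 * t 1 1 * h hs ht'
    - s 1 1 * t 1 1 * h ht hs' + s 0 1 * s 1 1 * h ht ht - t 0 1 * t 1 1 * h hs hs

end Matrix.SpecialLinearGroup

theorem Matrix.commute_fin_two_upper_constDiag {R : Type*} [CommRing R] (δ y δ' y' : R) :
    Commute !![δ, y; 0, δ] !![δ', y'; 0, δ'] := by
  show _ * _ = _ * _
  rw [mul_fin_two, mul_fin_two]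
  ext i j
  fin_cases i <;> fin_cases j <;> simp <;> ring

namespace DualNumber

theorem ker_fstHom_mul_self (R : Type*) [CommRing R] :
    RingHom.ker (fstHom R R R) * RingHom.ker (fstHom R R R) = ⊥ := by
  refine le_bot_iff.mp (Ideal.mul_le.mpr fun x hx y hy => ?_)
  rw [RingHom.mem_ker] at hx hy
  ext <;> simp_all

end DualNumber

section DualNumberSL

variable {k : Type} [Field k]

open Matrix.SpecialLinearGroup

theorem rho_apply (g : SL(2, k[ε])) (i j : Fin 2) : rho k g i j = fst (g i j) := rfl

variable (k) in
noncomputable def rhoKerUpperTriangular : Subgroup SL(2, k[ε]) :=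
  (rho k).ker ⊓ upperTriangular

theorem mem_rhoKerUpperTriangular_iff {g : SL(2, k[ε])} :
    g ∈ rhoKerUpperTriangular k ↔
      ∃ x y : k, g.val = !![1 + inl x * ε, inl y * ε; 0, 1 - inl x * ε] := by
  constructor
  · rintro ⟨hker, h10 : g 1 0 = 0⟩
    have hfst (i j : Fin 2) : fst (g i j) = (1 : Matrix (Fin 2) (Fin 2) k) i j := by
      rw [← rho_apply, (rho k).mem_ker.mp hker]; rfl
    have hdet := congrArg snd (det_fin_two (g : Matrix (Fin 2) (Fin 2) k[ε]) ▸ g.prop)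
    have h00 : fst (g 0 0) = 1 := hfst 0 0
    have h01 : fst (g 0 1) = 0 := hfst 0 1
    have h11 : fst (g 1 1) = 1 := hfst 1 1
    simp only [h10, mul_zero, sub_zero, DualNumber.snd_mul, h00, h11, snd_one] at hdet
    refine ⟨snd (g 0 0), snd (g 0 1), ?_⟩
    ext i j : 1
    fin_cases i <;> fin_cases j <;> ext <;> simp [h00, h01, h10, h11]
    linear_combination hdet
  · rintro ⟨x, y, hg⟩
    refine ⟨(rho k).mem_ker.mpr (Matrix.SpecialLinearGroup.ext _ _ fun i j => ?_), ?_⟩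
    · rw [rho_apply, coe_one, hg]
      fin_cases i <;> fin_cases j <;> simp
    · show g 1 0 = 0
      simp [hg]

def upperOne : SL(2, k[ε]) :=
  ⟨!![1, 1; 0, 1], by simp [det_fin_two]⟩

def epsLower (a x : k) : SL(2, k[ε]) :=
  ⟨!![1 + inl a * ε, 0; inl x * ε, 1 - inl a * ε], by
    rw [det_fin_two]
    ext <;> simp⟩

theorem rho_upperOne : (rho k upperOne).val = !![1, 1; 0, 1] := by
  ext i j
  rw [rho_apply]
  fin_cases i <;> fin_cases j <;> simp [upperOne]

theorem rho_epsLower (a x : k) : (rho k (epsLower a x)).val = !![1, 0; 0, 1] := by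
  ext i j
  rw [rho_apply]
  fin_cases i <;> fin_cases j <;> simp [epsLower]

theorem commutator_upperOne_epsLower (a x : k) :
    (upperOne * epsLower a x * upperOne⁻¹ * (epsLower a x)⁻¹).val =
      !![1 + inl x * ε, inl (-(2 * a + x)) * ε; 0, 1 - inl x * ε] := by
  simp only [coe_mul, coe_inv, adjugate_fin_two]
  ext i j : 1
  fin_cases i <;> fin_cases j <;> ext <;> simp [upperOne, epsLower]
  ring

theorem mem_ker_fstHom_of_rho_eq {g : SL(2, k[ε])} {δ y : k}
    (hg : (rho k g).val = !![δ, y; 0, δ]) :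
    g 1 0 ∈ RingHom.ker (fstHom k k k) ∧ g 0 0 - g 1 1 ∈ RingHom.ker (fstHom k k k) := by
  have h (i j : Fin 2) : fst (g i j) = !![δ, y; 0, δ] i j := by rw [← rho_apply, hg]
  simp [h]

theorem commutator_mem_rhoKerUpperTriangular {s t : SL(2, k[ε])} {δ y δ' y' : k}
    (hs : (rho k s).val = !![δ, y; 0, δ]) (ht : (rho k t).val = !![δ', y'; 0, δ']) :
    s * t * s⁻¹ * t⁻¹ ∈ rhoKerUpperTriangular k := by
  have hcomm : Commute (rho k s) (rho k t) :=
    Subtype.ext (by simpa [hs, ht] using (commute_fin_two_upper_constDiag δ y δ' y').eq)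
  refine ⟨(rho k).mem_ker.mpr ?_, commutator_apply_one_zero (DualNumber.ker_fstHom_mul_self k)
    (mem_ker_fstHom_of_rho_eq hs).1 (mem_ker_fstHom_of_rho_eq hs).2
    (mem_ker_fstHom_of_rho_eq ht).1 (mem_ker_fstHom_of_rho_eq ht).2⟩
  rw [← commutatorElement_def, map_commutatorElement, commutatorElement_eq_one_iff_commute]
  exact hcomm

end DualNumberSL

theorem stmt12 (k : Type) [Field k] (hchar : ringChar k ≠ 2)
    -- `S = {g ∈ SL₂(R) : ρ(g) = (δ, y; 0, δ), δ = ±1, y ∈ k}`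
    (S : Set (Matrix.SpecialLinearGroup (Fin 2) (DualNumber k)))
    (hS : S = {g | ∃ δ y : k, (δ = 1 ∨ δ = -1) ∧ (rho k g).val = !![δ, y; 0, δ]}) :
    -- the commutator subgroup of `S`, i.e. the subgroup generated by all commutators
    -- `s t s⁻¹ t⁻¹` with `s, t ∈ S`, equals `{(1+xε, yε; 0, 1−xε) : x, y ∈ k}`
    (Subgroup.closure {c | ∃ s ∈ S, ∃ t ∈ S, c = s * t * s⁻¹ * t⁻¹} :
        Set (Matrix.SpecialLinearGroup (Fin 2) (DualNumber k))) =
      {g | ∃ x y : k, g.val = !![1 + inl x * DualNumber.eps, inl y * DualNumber.eps;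
          0, 1 - inl x * DualNumber.eps]} := by
  have hclosure : Subgroup.closure {c | ∃ s ∈ S, ∃ t ∈ S, c = s * t * s⁻¹ * t⁻¹} =
      rhoKerUpperTriangular k := by
    refine le_antisymm ((Subgroup.closure_le _).mpr ?_) fun g hg => Subgroup.subset_closure ?_
    · rintro _ ⟨s, hs, t, ht, rfl⟩
      rw [hS] at hs ht
      obtain ⟨δ, y, -, hs⟩ := hs
      obtain ⟨δ', y', -, ht⟩ := ht
      exact commutator_mem_rhoKerUpperTriangular hs ht
    · obtain ⟨x, y, hg⟩ := mem_rhoKerUpperTriangular_iff.mp hg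
      rw [hS]
      refine ⟨upperOne, ⟨1, 1, .inl rfl, rho_upperOne⟩, epsLower (-(x + y) / 2) x,
        ⟨1, 0, .inl rfl, rho_epsLower _ _⟩, Subtype.ext ?_⟩
      have h2 : (2 : k) ≠ 0 := Ring.two_ne_zero hchar
      rw [hg, commutator_upperOne_epsLower]
      congr
      field_simp
      ring
  ext g
  rw [SetLike.mem_coe, hclosure, mem_rhoKerUpperTriangular_iff]
  rfl
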